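/- For any positive integer m and any Ferrers board B, the board l(B) = (l_t, l_{t−1}, ..., l_1), where l_i is the number of cells of B in level i and t is the largest index with l_t ≠ 0, is a weakly increasing sequence (i.e., a Ferrers board), is a singleton board, and is m-level rook equivalent to B (r_{k,m}(B) = r_{k,m}(l(B)) for all k). -/

import Mathlib

/-!
A rook in level `i` kills exactly `m` cells of every lower level, since its column is full
there. Removing the top level therefore gives the factorization
`∑ₖ r_{k,m}(B) x(x - m)⋯(x - (N - k - 1)m) = ∏_{i ≤ N} (x + l_i + i m - N m)`, so the `m`-level
rook numbers of a Ferrers board depend only on the multiset `{l_i + i m}`. This multiset is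
the same for `B` and `l(B)`, by induction on the number of cells: a new cell in level `i₀`
raises `l_{i₀}` by one and raises the count of `l(B)` in level `i₁ = ⌊l_{i₀} / m⌋ + 1` by one,
and beforehand `l_{i₀} + i₀ m` equals that count plus `i₁ m`.
-/

/-- `(i, j)` (row `i`, column `j`, both 1-indexed) is a cell of the Ferrers board
with column heights `b 1, …, b n`. -/
def IsCell (b : ℕ → ℕ) (n : ℕ) (c : ℕ × ℕ) : Prop :=
  1 ≤ c.2 ∧ c.2 ≤ n ∧ 1 ≤ c.1 ∧ c.1 ≤ b c.2

/-- An `m`-level rook placement: no two rooks in the same column or level. -/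
def IsMLevelPlacement (m : ℕ) (b : ℕ → ℕ) (n : ℕ) (P : Finset (ℕ × ℕ)) : Prop :=
  (∀ c ∈ P, IsCell b n c) ∧
  (∀ c ∈ P, ∀ c' ∈ P, c.2 = c'.2 → c = c') ∧
  (∀ c ∈ P, ∀ c' ∈ P, (c.1 - 1) / m = (c'.1 - 1) / m → c = c')

/-- `r_{k,m}(B)`: the number of `m`-level rook placements with `k` rooks. -/
noncomputable def rkm (m : ℕ) (b : ℕ → ℕ) (n k : ℕ) : ℕ :=
  Nat.card {P : Finset (ℕ × ℕ) // IsMLevelPlacement m b n P ∧ P.card = k}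

/-- A singleton board: if `b j` is not a multiple of `m` (and `j < n`) then
`⌊b_{j+1}⌋_m > ⌊b_j⌋_m`. -/
def IsSingletonBoard (m : ℕ) (b : ℕ → ℕ) (n : ℕ) : Prop :=
  ∀ j, 1 ≤ j → j < n → ¬ (m ∣ b j) → m * (b j / m) < m * (b (j + 1) / m)

/-- `l_i`: the number of cells of the board in level `i` (rows `(i−1)m+1, …, im`). -/
def lvlCount (m : ℕ) (b : ℕ → ℕ) (n i : ℕ) : ℕ :=
  ∑ j ∈ Finset.Icc 1 n, (min (b j) (i * m) - min (b j) ((i - 1) * m))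

open Finset

/-- The number of cells of a column of height `w` lying in level `i`. -/
def colLvlCount (m w i : ℕ) : ℕ := min w (i * m) - min w ((i - 1) * m)

section ColLvlCount

variable {m w i : ℕ}

lemma colLvlCount_succ (m w k : ℕ) : colLvlCount m w (k + 1) = min m (w - k * m) := by
  rw [colLvlCount, Nat.add_sub_cancel, add_mul, one_mul]
  omega

@[simp] lemma colLvlCount_zero_left (m i : ℕ) : colLvlCount m 0 i = 0 := by
  simp [colLvlCount]

lemma colLvlCount_le_self : colLvlCount m w i ≤ w := by
  unfold colLvlCount; omega

lemma colLvlCount_le (hi : 1 ≤ i) : colLvlCount m w i ≤ m := by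
  obtain ⟨k, rfl⟩ := Nat.exists_eq_add_of_le' hi
  rw [colLvlCount_succ]; exact min_le_left _ _

lemma colLvlCount_eq_zero (h : w ≤ (i - 1) * m) : colLvlCount m w i = 0 := by
  have : (i - 1) * m ≤ i * m := Nat.mul_le_mul_right m (Nat.sub_le i 1)
  unfold colLvlCount; omega

lemma colLvlCount_eq_of_le (hi : 1 ≤ i) (h : i * m ≤ w) : colLvlCount m w i = m := by
  obtain ⟨k, rfl⟩ := Nat.exists_eq_add_of_le' hi
  rw [colLvlCount_succ]
  rw [add_mul, one_mul] at h
  omega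

lemma pos_of_colLvlCount_ne_zero (h : colLvlCount m w i ≠ 0) : (i - 1) * m < w := by
  by_contra! h'; exact h (colLvlCount_eq_zero h')

lemma colLvlCount_antitone {i' : ℕ} (hi : 1 ≤ i) (hii' : i ≤ i') :
    colLvlCount m w i' ≤ colLvlCount m w i := by
  obtain ⟨k, rfl⟩ := Nat.exists_eq_add_of_le' hi
  obtain ⟨k', rfl⟩ := Nat.exists_eq_add_of_le' (hi.trans hii')
  rw [colLvlCount_succ, colLvlCount_succ]
  have : k * m ≤ k' * m := Nat.mul_le_mul_right m (by omega)
  omega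

/-- The cell on top of a column of height `w` lies in level `w / m + 1`. -/
lemma colLvlCount_succ_left (hm : 0 < m) (w i : ℕ) :
    colLvlCount m (w + 1) i = colLvlCount m w i + if i = w / m + 1 then 1 else 0 := by
  rcases Nat.eq_zero_or_pos i with rfl | hi
  · simp [colLvlCount]
  obtain ⟨k, rfl⟩ := Nat.exists_eq_add_of_le' hi
  rw [colLvlCount_succ, colLvlCount_succ]
  have hdiv : w / m = k ↔ k * m ≤ w ∧ w < k * m + m := by
    rw [Nat.div_eq_iff hm]; omega
  split_ifs with h <;> omega

lemma colLvlCount_div_add_one (hm : 0 < m) (w : ℕ) : colLvlCount m w (w / m + 1) = w % m := by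
  rw [colLvlCount_succ]
  have := Nat.div_add_mod' w m
  have := Nat.mod_lt w hm
  omega

end ColLvlCount

section LvlCount

variable {m : ℕ} {b : ℕ → ℕ} {n i : ℕ}

lemma lvlCount_eq_sum (m : ℕ) (b : ℕ → ℕ) (n i : ℕ) :
    lvlCount m b n i = ∑ j ∈ Icc 1 n, colLvlCount m (b j) i := rfl

lemma lvlCount_le_sum : lvlCount m b n i ≤ ∑ j ∈ Icc 1 n, b j :=
  sum_le_sum fun _ _ => colLvlCount_le_self

lemma lvlCount_antitone {i' : ℕ} (hi : 1 ≤ i) (hii' : i ≤ i') :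
    lvlCount m b n i' ≤ lvlCount m b n i :=
  sum_le_sum fun _ _ => colLvlCount_antitone hi hii'

lemma lvlCount_le_mul_card (hi : 1 ≤ i) :
    lvlCount m b n i ≤ #{j ∈ Icc 1 n | (i - 1) * m < b j} * m := by
  rw [lvlCount_eq_sum, ← sum_filter_of_ne fun j _ h => pos_of_colLvlCount_ne_zero h]
  exact (sum_le_sum fun _ _ => colLvlCount_le hi).trans_eq (by rw [sum_const, smul_eq_mul])

/-- Every column of height at least `h ≥ i * m` is full in level `i`. -/
lemma mul_card_le_lvlCount (hi : 1 ≤ i) {h : ℕ} (hh : i * m ≤ h) :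
    #{j ∈ Icc 1 n | h ≤ b j} * m ≤ lvlCount m b n i := by
  rw [lvlCount_eq_sum, ← smul_eq_mul, ← sum_const]
  refine (sum_congr rfl fun j hj => ?_).trans_le (sum_le_sum_of_subset (filter_subset _ _))
  exact (colLvlCount_eq_of_le hi (hh.trans (mem_filter.1 hj).2)).symm

lemma lvlCount_lt_mul_card (hi : 1 ≤ i) {j₀ : ℕ} (hj₀ : j₀ ∈ Icc 1 n)
    (hlow : (i - 1) * m ≤ b j₀) (hhigh : b j₀ < i * m) :
    lvlCount m b n i < #{j ∈ Icc 1 n | (i - 1) * m ≤ b j} * m := by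
  rw [lvlCount_eq_sum, ← sum_filter_of_ne fun j _ h => (pos_of_colLvlCount_ne_zero h).le]
  refine (sum_lt_sum (fun _ _ => colLvlCount_le hi) ⟨j₀, mem_filter.2 ⟨hj₀, hlow⟩, ?_⟩).trans_eq
    (by rw [sum_const, smul_eq_mul])
  have hm : m ≠ 0 := by rintro rfl; simp at hhigh
  obtain ⟨k, rfl⟩ := Nat.exists_eq_add_of_le' hi
  rw [colLvlCount_succ]
  rw [add_mul, one_mul] at hhigh
  omega

/-- The columns reaching above level `i₀` are full in level `i₀`. -/
lemma lvlCount_le_of_lt {i₀ : ℕ} (hm : 0 < m) (hi₀ : 1 ≤ i₀) (hi : i₀ < i) :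
    lvlCount m b n i ≤ lvlCount m b n i₀ / m * m := by
  have hcols : #{j ∈ Icc 1 n | (i - 1) * m < b j} ≤ #{j ∈ Icc 1 n | i₀ * m ≤ b j} := by
    have : i₀ * m ≤ (i - 1) * m := Nat.mul_le_mul_right m (by omega)
    exact card_le_card (monotone_filter_right _ fun j _ h => by omega)
  have hfull : #{j ∈ Icc 1 n | i₀ * m ≤ b j} * m ≤ lvlCount m b n i₀ :=
    mul_card_le_lvlCount hi₀ le_rfl
  calc lvlCount m b n i ≤ #{j ∈ Icc 1 n | (i - 1) * m < b j} * m :=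
        lvlCount_le_mul_card (by omega)
    _ ≤ lvlCount m b n i₀ / m * m :=
        Nat.mul_le_mul_right m (hcols.trans ((Nat.le_div_iff_mul_le hm).2 hfull))

/-- The columns reaching level `i₀` are full in every lower level. -/
lemma div_add_one_mul_le_lvlCount {i₀ : ℕ} (hm : 0 < m) (hi : 1 ≤ i) (hii₀ : i < i₀)
    (hlt : lvlCount m b n i₀ < #{j ∈ Icc 1 n | (i₀ - 1) * m ≤ b j} * m) :
    (lvlCount m b n i₀ / m + 1) * m ≤ lvlCount m b n i :=
  calc (lvlCount m b n i₀ / m + 1) * m ≤ #{j ∈ Icc 1 n | (i₀ - 1) * m ≤ b j} * m :=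
        Nat.mul_le_mul_right m ((Nat.div_lt_iff_lt_mul hm).2 hlt)
    _ ≤ lvlCount m b n i := mul_card_le_lvlCount hi (Nat.mul_le_mul_right m (by omega))

lemma lvlCount_singleton (hm : 0 < m) (hi : 2 ≤ i) (hdvd : ¬ m ∣ lvlCount m b n i) :
    m * (lvlCount m b n i / m) < m * (lvlCount m b n (i - 1) / m) := by
  have hlt : lvlCount m b n i < #{j ∈ Icc 1 n | (i - 1) * m ≤ b j} * m := by
    refine lt_of_le_of_ne ((lvlCount_le_mul_card (by omega)).trans ?_)
      fun h => hdvd ⟨_, h.trans (mul_comm _ _)⟩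
    exact Nat.mul_le_mul_right m (card_le_card (monotone_filter_right _ fun j _ h => h.le))
  have := div_add_one_mul_le_lvlCount (i := i - 1) hm (by omega) (by omega) hlt
  exact Nat.mul_lt_mul_of_pos_left ((Nat.le_div_iff_mul_le hm).2 this) hm

end LvlCount

section Invariance

variable {m : ℕ} {b : ℕ → ℕ} {n : ℕ}

lemma lvlCount_eq_zero_of_forall (hb : ∀ j ∈ Icc 1 n, b j = 0) (i : ℕ) : lvlCount m b n i = 0 := by
  rw [lvlCount_eq_sum]
  exact sum_eq_zero fun j hj => by rw [hb j hj, colLvlCount_zero_left]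

lemma lvlCount_add_cell (hm : 0 < m) {b' : ℕ → ℕ} {j₀ : ℕ} (hj₀ : j₀ ∈ Icc 1 n)
    (hb' : b' j₀ = b j₀ + 1) (hoff : ∀ j ∈ Icc 1 n, j ≠ j₀ → b' j = b j) (i : ℕ) :
    lvlCount m b' n i = lvlCount m b n i + if i = b j₀ / m + 1 then 1 else 0 := by
  rw [lvlCount_eq_sum, lvlCount_eq_sum, ← add_sum_erase _ _ hj₀, ← add_sum_erase _ _ hj₀,
    sum_congr rfl fun j hj => by rw [hoff j (mem_of_mem_erase hj) (ne_of_mem_erase hj)],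
    hb', colLvlCount_succ_left hm]
  ring

private lemma sum_Icc_ite_lt_eq {N i₀ : ℕ} (a c : ℕ) (h1 : 1 ≤ i₀) (h2 : i₀ ≤ N) :
    ∑ i ∈ Icc 1 N, (if i < i₀ then a else if i = i₀ then c else 0) = (i₀ - 1) * a + c := by
  have : {i ∈ Icc 1 N | i < i₀} = Ico 1 i₀ := by ext; simp; omega
  rw [sum_ite, sum_const, sum_ite_eq', this, Nat.card_Ico, smul_eq_mul, if_pos]
  simp only [mem_filter, mem_Icc]
  omega

/-- In level `⌊l_{i₀} / m⌋ + 1` of `l(B)`, the columns `l_i` with `i < i₀` are full, `l_{i₀}`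
contributes `l_{i₀} % m` cells and the columns with `i > i₀` are too short. -/
lemma lvlCount_lvlCount_div_add_one (hm : 0 < m) {N i₀ j₀ : ℕ} (hi₀ : 1 ≤ i₀) (hi₀N : i₀ ≤ N)
    (hj₀ : j₀ ∈ Icc 1 n) (hlow : (i₀ - 1) * m ≤ b j₀) (hhigh : b j₀ < i₀ * m) :
    lvlCount m (lvlCount m b n) N (lvlCount m b n i₀ / m + 1)
      + (lvlCount m b n i₀ / m + 1) * m = lvlCount m b n i₀ + i₀ * m := by
  have hterm : ∀ i ∈ Icc 1 N, colLvlCount m (lvlCount m b n i) (lvlCount m b n i₀ / m + 1)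
      = if i < i₀ then m else if i = i₀ then lvlCount m b n i₀ % m else 0 := by
    intro i hi
    rw [mem_Icc] at hi
    split_ifs with hlt heq
    · exact colLvlCount_eq_of_le (Nat.le_add_left 1 _) (div_add_one_mul_le_lvlCount hm hi.1 hlt
        (lvlCount_lt_mul_card hi₀ hj₀ hlow hhigh))
    · rw [heq]; exact colLvlCount_div_add_one hm _
    · exact colLvlCount_eq_zero (lvlCount_le_of_lt hm hi₀ (by omega))
  rw [lvlCount_eq_sum, sum_congr rfl hterm, sum_Icc_ite_lt_eq _ _ hi₀ hi₀N]
  have := Nat.div_add_mod' (lvlCount m b n i₀) m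
  generalize lvlCount m b n i₀ = v at *
  obtain ⟨k, rfl⟩ := Nat.exists_eq_add_of_le' hi₀
  simp only [Nat.add_sub_cancel, add_mul, one_mul] at *
  omega

def levelMultiset (m : ℕ) (b : ℕ → ℕ) (n N : ℕ) : Multiset ℕ :=
  (Icc 1 N).val.map fun i => lvlCount m b n i + i * m

private lemma map_val_eq_cons_erase {s : Finset ℕ} {f g : ℕ → ℕ} {i₀ : ℕ} (hi₀ : i₀ ∈ s)
    (hfg : ∀ i ∈ s, i ≠ i₀ → g i = f i) :
    s.val.map g = g i₀ ::ₘ (s.val.map f).erase (f i₀) := by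
  rw [← insert_erase hi₀, insert_val_of_notMem (notMem_erase i₀ s), Multiset.map_cons,
    Multiset.map_cons, Multiset.erase_cons_head]
  exact congrArg _ (Multiset.map_congr rfl fun i hi =>
    hfg i (mem_of_mem_erase hi) (ne_of_mem_erase hi))

lemma levelMultiset_add_cell (hm : 0 < m) {b' : ℕ → ℕ} {N j₀ : ℕ} (hj₀ : j₀ ∈ Icc 1 n)
    (hb' : b' j₀ = b j₀ + 1) (hoff : ∀ j ∈ Icc 1 n, j ≠ j₀ → b' j = b j) (hN : b j₀ < N * m) :
    levelMultiset m b' n N =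
      (lvlCount m b n (b j₀ / m + 1) + 1 + (b j₀ / m + 1) * m) ::ₘ
        (levelMultiset m b n N).erase (lvlCount m b n (b j₀ / m + 1) + (b j₀ / m + 1) * m) := by
  have hi₀ : b j₀ / m + 1 ∈ Icc 1 N :=
    mem_Icc.2 ⟨Nat.le_add_left 1 _, (Nat.div_lt_iff_lt_mul hm).2 hN⟩
  have hcell := lvlCount_add_cell hm hj₀ hb' hoff
  rw [levelMultiset, map_val_eq_cons_erase hi₀ fun i _ hi => by rw [hcell, if_neg hi, add_zero],
    hcell, if_pos rfl]
  rfl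

lemma exists_add_cell {S : ℕ} (hS : ∑ j ∈ Icc 1 n, b j = S + 1) :
    ∃ b₀ : ℕ → ℕ, ∃ j₀ ∈ Icc 1 n, b j₀ = b₀ j₀ + 1 ∧ (∀ j ∈ Icc 1 n, j ≠ j₀ → b j = b₀ j) ∧
      ∑ j ∈ Icc 1 n, b₀ j = S := by
  obtain ⟨j₀, hj₀, hbj₀⟩ := exists_ne_zero_of_sum_ne_zero (hS.trans_ne S.succ_ne_zero)
  refine ⟨Function.update b j₀ (b j₀ - 1), j₀, hj₀, by rw [Function.update_self]; omega,
    fun j _ hj => by rw [Function.update_of_ne hj], ?_⟩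
  rw [sum_update_of_mem hj₀, ← erase_eq]
  rw [← add_sum_erase _ _ hj₀] at hS
  omega

lemma levelMultiset_lvlCount_of_add_cell (hm : 0 < m) {b₀ : ℕ → ℕ} {N j₀ : ℕ}
    (hj₀ : j₀ ∈ Icc 1 n) (hb : b j₀ = b₀ j₀ + 1) (hoff : ∀ j ∈ Icc 1 n, j ≠ j₀ → b j = b₀ j)
    (hN : ∑ j ∈ Icc 1 n, b j ≤ N)
    (h₀ : levelMultiset m (lvlCount m b₀ n) N N = levelMultiset m b₀ n N) :
    levelMultiset m (lvlCount m b n) N N = levelMultiset m b n N := by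
  have hcell := lvlCount_add_cell (m := m) hm hj₀ hb hoff
  have hbN : b j₀ ≤ N := (single_le_sum (fun _ _ => Nat.zero_le _) hj₀).trans hN
  have hlN : lvlCount m b n (b₀ j₀ / m + 1) ≤ N := lvlCount_le_sum.trans hN
  have hNm : N ≤ N * m := Nat.le_mul_of_pos_right N hm
  have hi₀N : b₀ j₀ / m + 1 ≤ N := (Nat.div_le_self _ _).trans_lt (by omega)
  have key := lvlCount_lvlCount_div_add_one hm (Nat.le_add_left 1 _) hi₀N hj₀
    (by simpa using Nat.div_mul_le_self (b₀ j₀) m) (by simpa [add_mul] using Nat.lt_div_mul_add hm)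
  rw [levelMultiset_add_cell hm hj₀ hb hoff (by omega),
    levelMultiset_add_cell (b := lvlCount m b₀ n) (b' := lvlCount m b n) hm
      (mem_Icc.2 ⟨Nat.le_add_left 1 _, hi₀N⟩) (by rw [hcell, if_pos rfl])
      (fun i _ hi => by rw [hcell, if_neg hi, add_zero]) (by rw [hcell, if_pos rfl] at hlN; omega),
    h₀, ← key]
  congr 1
  omega

theorem levelMultiset_lvlCount (hm : 0 < m) {N : ℕ} (hN : ∑ j ∈ Icc 1 n, b j ≤ N) :
    levelMultiset m (lvlCount m b n) N N = levelMultiset m b n N := by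
  obtain ⟨S, hS⟩ : ∃ S, ∑ j ∈ Icc 1 n, b j = S := ⟨_, rfl⟩
  induction S generalizing b with
  | zero =>
    have hb := lvlCount_eq_zero_of_forall (m := m) (sum_eq_zero_iff.1 hS)
    simp only [levelMultiset, hb, lvlCount_eq_zero_of_forall fun i _ => hb i]
  | succ S ih =>
    obtain ⟨b₀, j₀, hj₀, hb, hoff, hS₀⟩ := exists_add_cell hS
    exact levelMultiset_lvlCount_of_add_cell hm hj₀ hb hoff hN (ih (by omega) hS₀)

end Invariance

/-- Zero-based level of a cell: the cells of level `i` have `cellLevel m c = i - 1`. -/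
def cellLevel (m : ℕ) (c : ℕ × ℕ) : ℕ := (c.1 - 1) / m

def IsRookSet (m : ℕ) (P : Finset (ℕ × ℕ)) : Prop :=
  Set.InjOn Prod.snd (P : Set (ℕ × ℕ)) ∧ Set.InjOn (cellLevel m) (P : Set (ℕ × ℕ))

lemma IsRookSet.mono {m : ℕ} {P Q : Finset (ℕ × ℕ)} (hP : IsRookSet m P) (hQP : Q ⊆ P) :
    IsRookSet m Q :=
  ⟨hP.1.mono (coe_subset.2 hQP), hP.2.mono (coe_subset.2 hQP)⟩

open scoped Classical in
noncomputable def levelPlacements (m : ℕ) (S : Finset (ℕ × ℕ)) (k : ℕ) :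
    Finset (Finset (ℕ × ℕ)) :=
  {P ∈ S.powersetCard k | IsRookSet m P}

section LevelPlacements

variable {m : ℕ} {S : Finset (ℕ × ℕ)} {k : ℕ}

lemma mem_levelPlacements {P : Finset (ℕ × ℕ)} :
    P ∈ levelPlacements m S k ↔ P ⊆ S ∧ P.card = k ∧ IsRookSet m P := by
  simp [levelPlacements, and_assoc]

lemma card_levelPlacements_zero : #(levelPlacements m S 0) = 1 := by
  rw [card_eq_one]
  refine ⟨∅, eq_singleton_iff_unique_mem.2 ⟨?_, fun P hP => ?_⟩⟩
  · simp [mem_levelPlacements, IsRookSet]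
  · exact card_eq_zero.1 (mem_levelPlacements.1 hP).2.1

lemma levelPlacements_eq_empty {N : ℕ} (hS : ∀ c ∈ S, cellLevel m c < N) (hk : N < k) :
    levelPlacements m S k = ∅ := by
  refine eq_empty_of_forall_notMem fun P hP => ?_
  obtain ⟨hPS, hcard, -, hlev⟩ := mem_levelPlacements.1 hP
  have := card_le_card_of_injOn (t := range N) (cellLevel m)
    (fun c hc => mem_range.2 (hS c (hPS hc))) hlev
  rw [card_range] at this
  omega

lemma card_filter_mem_levelPlacements {c : ℕ × ℕ} (hc : c ∈ S) :
    #{P ∈ levelPlacements m S (k + 1) | c ∈ P} =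
      #(levelPlacements m {d ∈ S | cellLevel m d ≠ cellLevel m c ∧ d.2 ≠ c.2} k) := by
  refine card_nbij' (·.erase c) (insert c ·) (fun P hP => ?_) (fun Q hQ => ?_)
    (fun P hP => insert_erase (mem_filter.1 hP).2) (fun Q hQ => erase_insert fun hcQ => ?_)
  · obtain ⟨hP, hcP⟩ := mem_filter.1 hP
    obtain ⟨hPS, hcard, hrook⟩ := mem_levelPlacements.1 hP
    refine mem_levelPlacements.2 ⟨fun d hd => ?_, by rw [card_erase_of_mem hcP, hcard]; rfl,
      hrook.mono (erase_subset c P)⟩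
    obtain ⟨hdc, hdP⟩ := mem_erase.1 hd
    exact mem_filter.2 ⟨hPS hdP, fun h => hdc (hrook.2 hdP hcP h),
      fun h => hdc (hrook.1 hdP hcP h)⟩
  · obtain ⟨hQS, hcard, hcol, hlev⟩ := mem_levelPlacements.1 hQ
    have hcQ : c ∉ Q := fun h => (mem_filter.1 (hQS h)).2.1 rfl
    refine mem_filter.2 ⟨mem_levelPlacements.2 ⟨insert_subset hc fun d hd => ?_, ?_, ?_, ?_⟩,
      mem_insert_self c Q⟩
    · exact (mem_filter.1 (hQS hd)).1
    · rw [card_insert_of_notMem hcQ, hcard]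
    · rw [coe_insert, Set.injOn_insert hcQ]
      exact ⟨hcol, fun ⟨d, hd, h⟩ => (mem_filter.1 (hQS hd)).2.2 h⟩
    · rw [coe_insert, Set.injOn_insert hcQ]
      exact ⟨hlev, fun ⟨d, hd, h⟩ => (mem_filter.1 (hQS hd)).2.1 h⟩
  · exact (mem_filter.1 ((mem_levelPlacements.1 hQ).1 hcQ)).2.1 rfl

lemma card_levelPlacements_succ (ℓ : ℕ) :
    #(levelPlacements m S (k + 1)) =
      #(levelPlacements m {d ∈ S | cellLevel m d ≠ ℓ} (k + 1)) +
        ∑ c ∈ S with cellLevel m c = ℓ,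
          #(levelPlacements m {d ∈ S | cellLevel m d ≠ ℓ ∧ d.2 ≠ c.2} k) := by
  classical
  set T := {c ∈ S | cellLevel m c = ℓ}
  have hlow : {P ∈ levelPlacements m S (k + 1) | ∀ c ∈ P, cellLevel m c ≠ ℓ} =
      levelPlacements m {d ∈ S | cellLevel m d ≠ ℓ} (k + 1) := by
    ext P
    simp only [mem_filter, mem_levelPlacements, subset_iff]
    grind
  have htop : {P ∈ levelPlacements m S (k + 1) | ¬ ∀ c ∈ P, cellLevel m c ≠ ℓ} =
      T.biUnion fun c => {P ∈ levelPlacements m S (k + 1) | c ∈ P} := by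
    ext P
    simp only [T, mem_filter, mem_biUnion, mem_levelPlacements, subset_iff]
    grind
  have hdisj : (T : Set (ℕ × ℕ)).PairwiseDisjoint
      fun c => {P ∈ levelPlacements m S (k + 1) | c ∈ P} := by
    intro c hc c' hc' hcc'
    refine disjoint_filter.2 fun P hP hcP hc'P => hcc' ?_
    refine (mem_levelPlacements.1 hP).2.2.2 hcP hc'P ?_
    rw [(mem_filter.1 hc).2, (mem_filter.1 hc').2]
  rw [← card_filter_add_card_filter_not (fun P => ∀ c ∈ P, cellLevel m c ≠ ℓ), hlow,
    htop, card_biUnion hdisj]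
  congr 1
  refine sum_congr rfl fun c hc => ?_
  rw [card_filter_mem_levelPlacements (mem_filter.1 hc).1, (mem_filter.1 hc).2]

def colPerm (σ : Equiv.Perm ℕ) : ℕ × ℕ ≃ ℕ × ℕ := (Equiv.refl ℕ).prodCongr σ

lemma IsRookSet.map_colPerm {P : Finset (ℕ × ℕ)} (σ : Equiv.Perm ℕ) (hP : IsRookSet m P) :
    IsRookSet m (P.map (colPerm σ).toEmbedding) := by
  rw [IsRookSet, coe_map]
  exact ⟨Set.InjOn.image_of_comp (σ.injective.comp_injOn hP.1), Set.InjOn.image_of_comp hP.2⟩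

lemma card_levelPlacements_map_colPerm (σ : Equiv.Perm ℕ) :
    #(levelPlacements m (S.map (colPerm σ).toEmbedding) k) = #(levelPlacements m S k) := by
  have key : ∀ (τ : Equiv.Perm ℕ) (S : Finset (ℕ × ℕ)) P, P ∈ levelPlacements m S k →
      P.map (colPerm τ).toEmbedding ∈ levelPlacements m (S.map (colPerm τ).toEmbedding) k := by
    intro τ S P hP
    obtain ⟨hPS, hcard, hrook⟩ := mem_levelPlacements.1 hP
    exact mem_levelPlacements.2 ⟨map_subset_map.2 hPS, by rw [card_map, hcard],
      hrook.map_colPerm τ⟩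
  have hinv : ∀ P : Finset (ℕ × ℕ),
      (P.map (colPerm σ).toEmbedding).map (colPerm σ⁻¹).toEmbedding = P :=
    (colPerm σ).finsetCongr.left_inv
  symm
  refine card_nbij' (·.map (colPerm σ).toEmbedding) (·.map (colPerm σ⁻¹).toEmbedding)
    (fun P hP => key σ S P hP) (fun P hP => ?_) (fun P _ => hinv P)
    (fun P _ => (colPerm σ).finsetCongr.right_inv P)
  simpa only [hinv, mem_coe] using key σ⁻¹ _ P hP

end LevelPlacements

def cells (b : ℕ → ℕ) (n : ℕ) : Finset (ℕ × ℕ) :=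
  (Icc 1 n).biUnion fun j => Icc 1 (b j) ×ˢ {j}

section Cells

variable {m : ℕ} {b : ℕ → ℕ} {n : ℕ}

lemma mem_cells {c : ℕ × ℕ} : c ∈ cells b n ↔ IsCell b n c := by
  simp only [cells, mem_biUnion, mem_product, mem_Icc, mem_singleton, IsCell]
  grind

lemma rkm_eq_card (m : ℕ) (b : ℕ → ℕ) (n k : ℕ) :
    rkm m b n k = #(levelPlacements m (cells b n) k) := by
  refine Nat.subtype_card _ fun P => ?_
  simp only [mem_levelPlacements, IsMLevelPlacement, IsRookSet, Set.InjOn, cellLevel, subset_iff,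
    mem_cells, mem_coe]
  tauto

lemma card_filter_cells_cellLevel (hm : 0 < m) (i : ℕ) :
    #{c ∈ cells b n | cellLevel m c = i} = lvlCount m b n (i + 1) := by
  rw [cells, filter_biUnion, card_biUnion, lvlCount_eq_sum]
  · refine sum_congr rfl fun j _ => ?_
    have hrows : {c ∈ Icc 1 (b j) ×ˢ {j} | cellLevel m c = i} =
        Ioc (i * m) (min (b j) ((i + 1) * m)) ×ˢ {j} := by
      ext c
      simp only [mem_filter, mem_product, mem_Icc, mem_Ioc, mem_singleton, cellLevel,
        Nat.div_eq_iff hm, add_mul, one_mul]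
      omega
    rw [hrows, card_product, card_singleton, mul_one, Nat.card_Ioc, colLvlCount_succ, add_mul,
      one_mul]
    omega
  · intro j _ j' _ hjj'
    simp only [disjoint_left]
    grind

lemma filter_cells_cellLevel_ne (hm : 0 < m) {N : ℕ} (hb : ∀ j ∈ Icc 1 n, b j ≤ (N + 1) * m) :
    {c ∈ cells b n | cellLevel m c ≠ N} = cells (fun j => min (b j) (N * m)) n := by
  ext c
  rw [mem_filter, mem_cells, mem_cells]
  simp only [IsCell, cellLevel, le_min_iff]
  constructor
  · rintro ⟨⟨h1, h2, h3, h4⟩, hlev⟩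
    have := hb c.2 (mem_Icc.2 ⟨h1, h2⟩)
    rw [Ne, Nat.div_eq_iff hm, add_mul, one_mul] at *
    omega
  · rintro ⟨h1, h2, h3, h4, h5⟩
    refine ⟨⟨h1, h2, h3, h4⟩, ?_⟩
    rw [Ne, Nat.div_eq_iff hm]
    omega

lemma filter_cells_snd_ne {j : ℕ} (hj : j ∈ Icc 1 n) (hbj : b j = b n) :
    {c ∈ cells b n | c.2 ≠ j} = (cells b (n - 1)).map (colPerm (Equiv.swap j n)).toEmbedding := by
  ext c
  rw [mem_map_equiv, mem_filter, mem_cells, mem_cells, colPerm, Equiv.prodCongr_symm]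
  simp only [IsCell, Equiv.prodCongr_apply, Prod.map_snd, Prod.map_fst, Equiv.refl_symm,
    Equiv.refl_apply, Equiv.symm_swap, Equiv.swap_apply_def]
  rw [mem_Icc] at hj
  split_ifs with h1 h2 <;> grind

end Cells

section Factorization

variable {m : ℕ} {b : ℕ → ℕ} {n : ℕ}

lemma rkm_zero (m : ℕ) (b : ℕ → ℕ) (n : ℕ) : rkm m b n 0 = 1 := by
  rw [rkm_eq_card, card_levelPlacements_zero]

lemma rkm_eq_zero (hm : 0 < m) {N k : ℕ} (hb : ∀ j ∈ Icc 1 n, b j ≤ N * m) (hk : N < k) :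
    rkm m b n k = 0 := by
  rw [rkm_eq_card, levelPlacements_eq_empty (fun c hc => ?_) hk, card_empty]
  obtain ⟨h1, h2, h3, h4⟩ := mem_cells.1 hc
  have := hb c.2 (mem_Icc.2 ⟨h1, h2⟩)
  exact (Nat.div_lt_iff_lt_mul hm).2 (by omega)

/-- A placement either has no rook in level `N + 1`, and then lives on the board truncated at
height `N * m`, or has exactly one, on a cell `c`; the other rooks then lie on the truncated
board minus the column of `c`, which swapping that column with the last one turns into the
truncated board on `n - 1` columns. -/
theorem rkm_succ (hm : 0 < m) {N : ℕ} (hb : ∀ j ∈ Icc 1 n, b j ≤ (N + 1) * m)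
    (htop : N * m < b n) (k : ℕ) :
    rkm m b n (k + 1) = rkm m (fun j => min (b j) (N * m)) n (k + 1)
      + lvlCount m b n (N + 1) * rkm m (fun j => min (b j) (N * m)) (n - 1) k := by
  rw [rkm_eq_card, rkm_eq_card, rkm_eq_card, card_levelPlacements_succ N,
    filter_cells_cellLevel_ne hm hb, ← card_filter_cells_cellLevel hm, sum_const_nat fun c hc => ?_]
  obtain ⟨hcell, hlev⟩ := mem_filter.1 hc
  obtain ⟨h1, h2, h3, h4⟩ := mem_cells.1 hcell
  have hc1 : N * m < c.1 := by
    have := ((Nat.div_eq_iff hm).1 hlev).1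
    omega
  rw [← filter_filter, filter_cells_cellLevel_ne hm hb,
    filter_cells_snd_ne (mem_Icc.2 ⟨h1, h2⟩) (by omega),
    card_levelPlacements_map_colPerm]

lemma lvlCount_min_of_le {N i : ℕ} (hi : i ≤ N) :
    lvlCount m (fun j => min (b j) (N * m)) n i = lvlCount m b n i := by
  refine sum_congr rfl fun j _ => ?_
  dsimp only
  have : i * m ≤ N * m := Nat.mul_le_mul_right m hi
  have : (i - 1) * m ≤ i * m := Nat.mul_le_mul_right m (Nat.sub_le i 1)
  omega

lemma lvlCount_eq_zero_of_le {N : ℕ} (hb : ∀ j ∈ Icc 1 n, b j ≤ N * m) :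
    lvlCount m b n (N + 1) = 0 :=
  sum_eq_zero fun j hj => colLvlCount_eq_zero (by simpa using hb j hj)

lemma lvlCount_eq_lvlCount_sub_one_add (hn : 1 ≤ n) (i : ℕ) :
    lvlCount m b n i = lvlCount m b (n - 1) i + colLvlCount m (b n) i := by
  obtain ⟨n, rfl⟩ := Nat.exists_eq_add_of_le' hn
  rw [lvlCount_eq_sum, lvlCount_eq_sum, sum_Icc_succ_top (by omega), Nat.add_sub_cancel]

def mDescFactorial (m : ℕ) (x : ℤ) (j : ℕ) : ℤ := ∏ l ∈ range j, (x - l * m)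

lemma mDescFactorial_succ (m : ℕ) (x : ℤ) (j : ℕ) :
    mDescFactorial m x (j + 1) = x * mDescFactorial m (x - m) j := by
  rw [mDescFactorial, mDescFactorial, prod_range_succ']
  simp only [Nat.cast_add, Nat.cast_one, CharP.cast_eq_zero, zero_mul, sub_zero]
  rw [mul_comm]
  congr 1
  exact prod_congr rfl fun l _ => by ring

lemma mDescFactorial_eq_zero {i j : ℕ} (hji : j < i) : mDescFactorial m (j * m) i = 0 :=
  prod_eq_zero (mem_range.2 hji) (sub_self _)

lemma mDescFactorial_ne_zero (hm : 0 < m) (j : ℕ) : mDescFactorial m (j * m) j ≠ 0 := by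
  refine prod_ne_zero_iff.2 fun l hl => ?_
  rw [← sub_mul]
  have : (l : ℤ) < j := by exact_mod_cast mem_range.1 hl
  exact mul_ne_zero (by omega) (by exact_mod_cast hm.ne')

noncomputable def rookSum (m : ℕ) (b : ℕ → ℕ) (n N : ℕ) (x : ℤ) : ℤ :=
  ∑ k ∈ range (N + 1), (rkm m b n k : ℤ) * mDescFactorial m x (N - k)

def levelProd (m : ℕ) (b : ℕ → ℕ) (n N : ℕ) (x : ℤ) : ℤ :=
  ∏ i ∈ Icc 1 N, (x + lvlCount m b n i + i * m - N * m)

lemma rookSum_succ_of_le (hm : 0 < m) {N : ℕ} (hb : ∀ j ∈ Icc 1 n, b j ≤ N * m) (x : ℤ) :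
    rookSum m b n (N + 1) x = x * rookSum m b n N (x - m) := by
  rw [rookSum, sum_range_succ, rkm_eq_zero hm hb (Nat.lt_succ_self N), Nat.cast_zero, zero_mul,
    add_zero, rookSum, mul_sum]
  refine sum_congr rfl fun k hk => ?_
  rw [show N + 1 - k = N - k + 1 by have := mem_range.1 hk; omega, mDescFactorial_succ]
  ring

lemma rookSum_succ_eq_add (hm : 0 < m) {N : ℕ} (hb : ∀ j ∈ Icc 1 n, b j ≤ (N + 1) * m)
    (htop : N * m < b n) (x : ℤ) :
    rookSum m b n (N + 1) x = rookSum m (fun j => min (b j) (N * m)) n (N + 1) x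
      + lvlCount m b n (N + 1) * rookSum m (fun j => min (b j) (N * m)) (n - 1) N x := by
  have hstep : ∀ k ∈ range (N + 1), (rkm m b n (k + 1) : ℤ) * mDescFactorial m x (N + 1 - (k + 1))
      = rkm m (fun j => min (b j) (N * m)) n (k + 1) * mDescFactorial m x (N + 1 - (k + 1))
        + lvlCount m b n (N + 1)
          * (rkm m (fun j => min (b j) (N * m)) (n - 1) k * mDescFactorial m x (N - k)) := by
    intro k _
    rw [rkm_succ hm hb htop, Nat.add_sub_add_right]
    push_cast
    ring
  rw [rookSum, rookSum, rookSum, sum_range_succ', sum_range_succ' _ (N + 1), sum_congr rfl hstep,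
    sum_add_distrib, ← mul_sum, rkm_zero, rkm_zero]
  ring

lemma levelProd_succ (m : ℕ) (b : ℕ → ℕ) (n N : ℕ) (x : ℤ) :
    levelProd m b n (N + 1) x = (x + lvlCount m b n (N + 1)) * levelProd m b n N (x - m) := by
  rw [levelProd, prod_Icc_succ_top (by omega), mul_comm, levelProd]
  congr 1
  · push_cast; ring
  · exact prod_congr rfl fun i _ => by push_cast; ring

lemma levelProd_congr {c : ℕ → ℕ} {n' N : ℕ}
    (h : ∀ i ∈ Icc 1 N, lvlCount m b n i = lvlCount m c n' i) :
    levelProd m b n N = levelProd m c n' N :=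
  funext fun _ => prod_congr rfl fun i hi => by rw [h i hi]

lemma levelProd_eq_sub {c : ℕ → ℕ} {n' N : ℕ}
    (h : ∀ i ∈ Icc 1 N, lvlCount m c n' i + m = lvlCount m b n i) (x : ℤ) :
    levelProd m c n' N x = levelProd m b n N (x - m) :=
  prod_congr rfl fun i hi => by rw [← h i hi]; push_cast; ring

lemma levelProd_succ_of_le {N : ℕ} (hb : ∀ j ∈ Icc 1 n, b j ≤ N * m) (x : ℤ) :
    levelProd m b n (N + 1) x = x * levelProd m b n N (x - m) := by
  rw [levelProd_succ, lvlCount_eq_zero_of_le hb, Nat.cast_zero, add_zero]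

/-- Truncated at height `N * m`, the last column is full in every level `i ≤ N`. -/
lemma lvlCount_min_sub_one_add {N i : ℕ} (hn : 1 ≤ n) (htop : N * m ≤ b n) (hi : i ∈ Icc 1 N) :
    lvlCount m (fun j => min (b j) (N * m)) (n - 1) i + m = lvlCount m b n i := by
  have hiN : i * m ≤ N * m := Nat.mul_le_mul_right m (mem_Icc.1 hi).2
  rw [← lvlCount_min_of_le (b := b) (n := n) (mem_Icc.1 hi).2, lvlCount_eq_lvlCount_sub_one_add hn,
    colLvlCount_eq_of_le (mem_Icc.1 hi).1 (le_min (hiN.trans htop) hiN)]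

theorem rookSum_eq_levelProd (hm : 0 < m) (N : ℕ) :
    ∀ (b : ℕ → ℕ) (n : ℕ), MonotoneOn b (Set.Icc 1 n) → (∀ j ∈ Icc 1 n, b j ≤ N * m) →
      rookSum m b n N = levelProd m b n N := by
  induction N with
  | zero =>
    intro b n _ _
    funext x
    simp [rookSum, levelProd, rkm_zero, mDescFactorial]
  | succ N ih =>
    have of_le : ∀ (b : ℕ → ℕ) (n : ℕ), MonotoneOn b (Set.Icc 1 n) →
        (∀ j ∈ Icc 1 n, b j ≤ N * m) → rookSum m b n (N + 1) = levelProd m b n (N + 1) :=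
      fun b n hmono hb => funext fun x => by
        rw [rookSum_succ_of_le hm hb, ih b n hmono hb, levelProd_succ_of_le hb]
    intro b n hmono hb
    by_cases hle : ∀ j ∈ Icc 1 n, b j ≤ N * m
    · exact of_le b n hmono hle
    obtain ⟨j₀, hj₀, hbj₀⟩ : ∃ j ∈ Icc 1 n, N * m < b j := by
      simpa only [not_forall, not_le, exists_prop] using hle
    rw [mem_Icc] at hj₀
    have hn : 1 ≤ n := hj₀.1.trans hj₀.2
    have htop : N * m < b n := hbj₀.trans_le (hmono hj₀ ⟨hn, le_rfl⟩ hj₀.2)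
    have hmono' : MonotoneOn (fun j => min (b j) (N * m)) (Set.Icc 1 n) :=
      fun i hi j hj hij => min_le_min_right _ (hmono hi hj hij)
    funext x
    rw [rookSum_succ_eq_add hm hb htop, of_le _ n hmono' fun j _ => min_le_right _ _,
      ih _ (n - 1) (hmono'.mono (Set.Icc_subset_Icc_right (Nat.sub_le n 1)))
        fun j _ => min_le_right _ _,
      levelProd_succ_of_le fun j _ => min_le_right _ _,
      levelProd_congr fun i hi => lvlCount_min_of_le (mem_Icc.1 hi).2,
      levelProd_eq_sub fun i hi => lvlCount_min_sub_one_add hn htop.le hi, levelProd_succ]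
    ring

lemma eq_zero_of_sum_mul_mDescFactorial (hm : 0 < m) {N : ℕ} {d : ℕ → ℤ}
    (h : ∀ x, ∑ k ∈ range (N + 1), d k * mDescFactorial m x (N - k) = 0) {k : ℕ} (hk : k ≤ N) :
    d k = 0 := by
  suffices ∀ j ≤ N, d (N - j) = 0 by simpa [Nat.sub_sub_self hk] using this (N - k) (by omega)
  intro j
  induction j using Nat.strong_induction_on with
  | _ j ih =>
    intro hj
    have hx := h (j * m)
    rw [sum_eq_single (N - j) (fun l hl hlj => ?_) (fun h => (h (mem_range.2 (by omega))).elim),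
      Nat.sub_sub_self hj] at hx
    · exact (mul_eq_zero.1 hx).resolve_right (mDescFactorial_ne_zero hm j)
    have := mem_range.1 hl
    rcases lt_or_gt_of_ne (show N - l ≠ j by omega) with hlt | hgt
    · rw [show l = N - (N - l) by omega, ih _ hlt (by omega), zero_mul]
    · rw [mDescFactorial_eq_zero hgt, mul_zero]

lemma levelProd_eq_multiset_prod (m : ℕ) (b : ℕ → ℕ) (n N : ℕ) (x : ℤ) :
    levelProd m b n N x = ((levelMultiset m b n N).map fun w : ℕ => x + w - N * m).prod := by
  rw [levelProd, levelMultiset, Multiset.map_map, prod_eq_multiset_prod]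
  congr 1
  exact Multiset.map_congr rfl fun i _ => by simp only [Function.comp_apply]; push_cast; ring

theorem rkm_eq_of_levelMultiset_eq (hm : 0 < m) {c : ℕ → ℕ} {n' N : ℕ}
    (hb : MonotoneOn b (Set.Icc 1 n)) (hbN : ∀ j ∈ Icc 1 n, b j ≤ N * m)
    (hc : MonotoneOn c (Set.Icc 1 n')) (hcN : ∀ j ∈ Icc 1 n', c j ≤ N * m)
    (h : levelMultiset m b n N = levelMultiset m c n' N) (k : ℕ) :
    rkm m b n k = rkm m c n' k := by
  rcases le_or_gt k N with hk | hk
  · have hdiff := eq_zero_of_sum_mul_mDescFactorial hm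
      (d := fun k => (rkm m b n k : ℤ) - rkm m c n' k) (fun x => ?_) hk
    · exact_mod_cast sub_eq_zero.1 hdiff
    simp_rw [sub_mul, sum_sub_distrib]
    rw [sub_eq_zero]
    change rookSum m b n N x = rookSum m c n' N x
    rw [rookSum_eq_levelProd hm N b n hb hbN, rookSum_eq_levelProd hm N c n' hc hcN,
      levelProd_eq_multiset_prod, levelProd_eq_multiset_prod, h]
  · rw [rkm_eq_zero hm hbN hk, rkm_eq_zero hm hcN hk]

end Factorization

lemma lvlCount_of_reverse {m t : ℕ} {c L : ℕ → ℕ} (h : ∀ j ∈ Icc 1 t, c j = L (t + 1 - j))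
    (i : ℕ) : lvlCount m c t i = lvlCount m L t i := by
  refine sum_nbij' (fun j => t + 1 - j) (fun j => t + 1 - j) ?_ ?_ ?_ ?_
    fun j hj => by rw [h j hj]
  all_goals intro j hj; simp only [mem_Icc] at hj ⊢; omega

lemma lvlCount_of_le_of_eq_zero {m t N : ℕ} {L : ℕ → ℕ} (htN : t ≤ N)
    (hL : ∀ i, t < i → L i = 0) (i : ℕ) : lvlCount m L N i = lvlCount m L t i := by
  rw [lvlCount_eq_sum, lvlCount_eq_sum]
  refine (sum_subset (Icc_subset_Icc_right htN) fun j hjN hjt => ?_).symm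
  simp only [mem_Icc, not_and, not_le] at hjN hjt
  rw [hL j (hjt hjN.1), colLvlCount_zero_left]

theorem l_operator_lemma_general (m n t : ℕ) (hm : 0 < m) (b : ℕ → ℕ)
    (hmono : ∀ j k, 1 ≤ j → j ≤ k → k ≤ n → b j ≤ b k)
    (htmax : ∀ i, t < i → lvlCount m b n i = 0)
    (lB : ℕ → ℕ)
    (hlB : lB = fun j => if 1 ≤ j ∧ j ≤ t then lvlCount m b n (t + 1 - j) else 0) :
    (∀ j k, 1 ≤ j → j ≤ k → k ≤ t → lB j ≤ lB k) ∧
    IsSingletonBoard m lB t ∧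
    (∀ k, rkm m lB t k = rkm m b n k) := by
  have hlB' : ∀ j ∈ Icc 1 t, lB j = lvlCount m b n (t + 1 - j) := fun j hj => by
    rw [hlB]; exact if_pos (mem_Icc.1 hj)
  have hmono_lB : ∀ j k, 1 ≤ j → j ≤ k → k ≤ t → lB j ≤ lB k := fun j k hj hjk hk => by
    rw [hlB' j (mem_Icc.2 ⟨hj, hjk.trans hk⟩), hlB' k (mem_Icc.2 ⟨hj.trans hjk, hk⟩)]
    exact lvlCount_antitone (by omega) (by omega)
  refine ⟨hmono_lB, fun j hj hjt hdvd => ?_, fun k => ?_⟩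
  · rw [hlB' j (mem_Icc.2 ⟨hj, hjt.le⟩)] at hdvd ⊢
    rw [hlB' (j + 1) (mem_Icc.2 ⟨by omega, hjt⟩), show t + 1 - (j + 1) = t + 1 - j - 1 by omega]
    exact lvlCount_singleton hm (by omega) hdvd
  set N := t + ∑ j ∈ Icc 1 n, b j
  have hN : N ≤ N * m := Nat.le_mul_of_pos_right N hm
  have hlevels : levelMultiset m lB t N = levelMultiset m b n N := by
    rw [← levelMultiset_lvlCount (b := b) (n := n) hm (N := N) (by omega), levelMultiset,
      levelMultiset]
    refine Multiset.map_congr rfl fun i _ => ?_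
    rw [lvlCount_of_reverse hlB', lvlCount_of_le_of_eq_zero (N := N) (by omega) htmax]
  refine rkm_eq_of_levelMultiset_eq hm (fun j hj k hk hjk => hmono_lB j k hj.1 hjk hk.2)
    (fun j hj => ?_) (fun j hj k hk hjk => hmono j k hj.1 hjk hk.2) (fun j hj => ?_) hlevels k
  · rw [hlB' j hj]
    exact lvlCount_le_sum.trans (by omega)
  · exact (single_le_sum (fun _ _ => Nat.zero_le _) hj).trans (by omega)

/-- Lemma 4.2: for any Ferrers board `B`, the board `l(B) = (l_t, …, l_1)` (where
`l_i` counts cells of `B` in level `i` and `t` is the largest index with `l_t ≠ 0`)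
is a Ferrers board, is a singleton board, and is `m`-level rook equivalent to `B`. -/
theorem l_operator_lemma (m n t : ℕ) (hm : 0 < m) (b : ℕ → ℕ)
    (hmono : ∀ j k, 1 ≤ j → j ≤ k → k ≤ n → b j ≤ b k)
    (ht : lvlCount m b n t ≠ 0) (htmax : ∀ i, t < i → lvlCount m b n i = 0)
    (lB : ℕ → ℕ)
    (hlB : lB = fun j => if 1 ≤ j ∧ j ≤ t then lvlCount m b n (t + 1 - j) else 0) :
    (∀ j k, 1 ≤ j → j ≤ k → k ≤ t → lB j ≤ lB k) ∧
    IsSingletonBoard m lB t ∧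
    (∀ k, rkm m lB t k = rkm m b n k) :=
  l_operator_lemma_general m n t hm b hmono htmax lB hlB
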